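/- arXiv:1709.09459 — 2 statements merged into one kernel-verified Lean document; each statement's English description precedes it below -/
import Mathlib

section
/- Let μ be a nonzero Borel measure on ℝ with logarithmic moment generating function ψ. Assume U := interior of {ψ < ∞} is nonempty, λ₊ := sup{λ : ψ(λ) < ∞} < ∞, and ψ(λ₊) < ∞. Then lim_{λ↑λ₊} ψ'(λ) = lim_{ε↓0} ε^{-1}(ψ(λ₊) − ψ(λ₊−ε)) = ∫ x μ_{λ₊}(dx), the mean of the tilted measure μ_{λ₊}(dx) = e^{λ₊x − ψ(λ₊)} μ(dx), with all three quantities in (−∞,∞]. -/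
/-!
On `(l₀, λ₊)`, with `l₀` any point of the effective domain below `λ₊`, `ψ'(λ)` is the mean of the
tilted measure `μ_λ`, i.e. `(∫ x⁺ e^{λx} dμ - ∫ x⁻ e^{λx} dμ) / Φ(λ)`. As `λ ↑ λ₊`, `Φ(λ)` and the
negative part converge by dominated convergence (`x⁻ e^{λx}` decreases in `λ` and is integrable
strictly to the right of `l₀`), while the positive part increases in `λ` and converges, possibly
to `∞`, by Fatou's lemma. The mean value theorem transfers the limit of `ψ'` to the left difference
quotients of `ψ` at `λ₊`.
-/

open scoped ENNReal
open Filter MeasureTheory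

/-- The moment generating function `Φ(λ) = ∫ e^{λx} μ(dx) ∈ [0,∞]`. -/
noncomputable def mgf' (μ : Measure ℝ) (lam : ℝ) : ℝ≥0∞ :=
  ∫⁻ x, ENNReal.ofReal (Real.exp (lam * x)) ∂μ

/-- The logarithmic moment generating function `ψ(λ) = log Φ(λ)`, valued in `[-∞,∞]`
(with `log ∞ := ∞`). -/
noncomputable def logMgf (μ : Measure ℝ) (lam : ℝ) : EReal :=
  ENNReal.log (mgf' μ lam)

/-- `ψ` as a real-valued function (meaningful on the effective domain where `Φ` is finite). -/
noncomputable def logMgfReal (μ : Measure ℝ) (lam : ℝ) : ℝ :=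
  Real.log (mgf' μ lam).toReal

/-- The exponentially tilted measure `μ_λ(dx) = e^{λx - ψ(λ)} μ(dx)`. -/
noncomputable def tilted' (μ : Measure ℝ) (lam : ℝ) : Measure ℝ :=
  μ.withDensity (fun x => ENNReal.ofReal (Real.exp (lam * x - logMgfReal μ lam)))

open ProbabilityTheory Set Topology Real

theorem lt_csSup_of_mem_interior {α : Type*} [ConditionallyCompleteLinearOrder α]
    [TopologicalSpace α] [OrderTopology α] [DenselyOrdered α] [NoMaxOrder α]
    {s : Set α} (hs : BddAbove s) {a : α} (ha : a ∈ interior s) : a < sSup s := by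
  have hmem : s ∈ 𝓝[>] a := mem_nhdsWithin_of_mem_nhds (mem_interior_iff_mem_nhds.1 ha)
  obtain ⟨x, hxs, hax⟩ := Filter.nonempty_of_mem (inter_mem hmem self_mem_nhdsWithin)
  exact lt_of_lt_of_le hax (le_csSup hs hxs)

theorem tendsto_slope_nhdsGT_zero_of_tendsto_deriv {f : ℝ → ℝ} {a b : ℝ} {m : EReal}
    (hab : a < b) (hcont : ContinuousOn f (Icc a b)) (hdiff : DifferentiableOn ℝ f (Ioo a b))
    (hderiv : Tendsto (fun x ↦ ((deriv f x : ℝ) : EReal)) (𝓝[<] b) (𝓝 m)) :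
    Tendsto (fun e : ℝ ↦ (((f b - f (b - e)) / e : ℝ) : EReal)) (𝓝[>] 0) (𝓝 m) := by
  intro U hU
  obtain ⟨c, hcb, hc⟩ := mem_nhdsLT_iff_exists_Ioo_subset.1 (hderiv hU)
  refine mem_map.2 (mem_of_superset (Ioo_mem_nhdsGT (sub_pos.2 (max_lt hcb hab))) fun e he ↦ ?_)
  have hlt : max c a < b - e := by linarith [he.2]
  obtain ⟨ξ, hξ, hξ_slope⟩ := exists_deriv_eq_slope f (sub_lt_self b he.1)
    (hcont.mono (Icc_subset_Icc (by linarith [le_max_right c a]) le_rfl))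
    (hdiff.mono (Ioo_subset_Ioo_left (by linarith [le_max_right c a])))
  have hξc : ξ ∈ Ioo c b := ⟨by linarith [le_max_left c a, hξ.1], hξ.2⟩
  simpa [hξ_slope] using hc hξc

section LeftContinuity

variable {α : Type*} [MeasurableSpace α] {μ : Measure α} {F : ℝ → α → ℝ≥0∞} {a : ℝ}

theorem tendsto_lintegral_nhdsLT_of_monotone (hmeas : ∀ l, AEMeasurable (F l) μ)
    (hmono : ∀ x, Monotone (F · x)) (hlim : ∀ x, Tendsto (F · x) (𝓝[<] a) (𝓝 (F a x))) :
    Tendsto (fun l ↦ ∫⁻ x, F l x ∂μ) (𝓝[<] a) (𝓝 (∫⁻ x, F a x ∂μ)) := by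
  refine tendsto_of_le_liminf_of_limsup_le ?_ ?_
  · calc ∫⁻ x, F a x ∂μ = ∫⁻ x, liminf (F · x) (𝓝[<] a) ∂μ := by
          simp only [fun x ↦ (hlim x).liminf_eq]
      _ ≤ _ := lintegral_liminf_le' hmeas
  · refine limsup_le_of_le (by isBoundedDefault) ?_
    filter_upwards [self_mem_nhdsWithin] with l hl
    exact lintegral_mono fun x ↦ hmono x (le_of_lt hl)

theorem tendsto_lintegral_nhdsLT_of_antitone {c : ℝ} (hc : c < a)
    (hmeas : ∀ l, Measurable (F l)) (hanti : ∀ x, Antitone (F · x))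
    (hfin : ∫⁻ x, F c x ∂μ ≠ ⊤) (hlim : ∀ x, Tendsto (F · x) (𝓝[<] a) (𝓝 (F a x))) :
    Tendsto (fun l ↦ ∫⁻ x, F l x ∂μ) (𝓝[<] a) (𝓝 (∫⁻ x, F a x ∂μ)) :=
  tendsto_lintegral_filter_of_dominated_convergence (F c) (Eventually.of_forall hmeas)
    (by filter_upwards [Ioo_mem_nhdsLT hc] with l hl using ae_of_all _ fun x ↦ hanti x hl.1.le)
    hfin (ae_of_all _ hlim)

end LeftContinuity

/-- Meaningful when `∫⁻ x, ENNReal.ofReal (-x) ∂ν < ∞`; otherwise the `toReal` below is a junk `0`. -/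
noncomputable def erealMean (ν : Measure ℝ) : EReal :=
  (∫⁻ x, ENNReal.ofReal x ∂ν : EReal) - ((∫⁻ x, ENNReal.ofReal (-x) ∂ν).toReal : EReal)

theorem erealMean_eq_integral {ν : Measure ℝ} (hν : Integrable (fun x ↦ x) ν) :
    erealMean ν = ((∫ x, x ∂ν : ℝ) : EReal) := by
  rw [erealMean, integral_eq_lintegral_pos_part_sub_lintegral_neg_part hν, EReal.coe_sub,
    EReal.coe_ennreal_toReal hν.lintegral_lt_top.ne]

theorem tendsto_erealMean {ι : Type*} {f : Filter ι} {ν : ι → Measure ℝ} {ν₀ : Measure ℝ}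
    (hpos : Tendsto (fun i ↦ ∫⁻ x, ENNReal.ofReal x ∂(ν i)) f (𝓝 (∫⁻ x, ENNReal.ofReal x ∂ν₀)))
    (hneg : Tendsto (fun i ↦ ∫⁻ x, ENNReal.ofReal (-x) ∂(ν i)) f
      (𝓝 (∫⁻ x, ENNReal.ofReal (-x) ∂ν₀)))
    (hfin : ∫⁻ x, ENNReal.ofReal (-x) ∂ν₀ ≠ ⊤) :
    Tendsto (fun i ↦ erealMean (ν i)) f (𝓝 (erealMean ν₀)) := by
  have hpos' := (continuous_coe_ennreal_ereal.tendsto _).comp hpos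
  have hneg' := (continuous_coe_real_ereal.tendsto _).comp ((ENNReal.tendsto_toReal hfin).comp hneg)
  have hadd := (EReal.continuousAt_add
    (p := ((∫⁻ x, ENNReal.ofReal x ∂ν₀ : EReal), -((∫⁻ x, ENNReal.ofReal (-x) ∂ν₀).toReal : EReal)))
    (Or.inr (by simp)) (Or.inr (by simp))).tendsto.comp (hpos'.prodMk_nhds hneg'.neg)
  simp only [erealMean, sub_eq_add_neg]
  exact hadd

section Mgf

variable {μ : Measure ℝ} {a b l : ℝ}

theorem toReal_mgf' (μ : Measure ℝ) (l : ℝ) : (mgf' μ l).toReal = ∫ x, exp (l * x) ∂μ :=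
  (integral_eq_lintegral_of_nonneg_ae (ae_of_all _ fun _ ↦ (exp_pos _).le)
    (by fun_prop)).symm

theorem logMgfReal_eq_cgf (μ : Measure ℝ) : logMgfReal μ = cgf id μ :=
  funext fun l ↦ by rw [logMgfReal, cgf, toReal_mgf']; rfl

theorem mgf'_ne_top_iff : mgf' μ l ≠ ⊤ ↔ l ∈ integrableExpSet id μ :=
  lintegral_ofReal_ne_top_iff_integrable (by fun_prop) (ae_of_all _ fun _ ↦ (exp_pos _).le)

theorem toReal_mgf'_pos (hμ : μ ≠ 0) (hl : mgf' μ l ≠ ⊤) : 0 < (mgf' μ l).toReal := by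
  rw [toReal_mgf']
  exact mgf_pos' (X := id) hμ (mgf'_ne_top_iff.1 hl)

theorem mgf'_ne_top_of_mem_Icc (ha : mgf' μ a ≠ ⊤) (hb : mgf' μ b ≠ ⊤) (hl : l ∈ Icc a b) :
    mgf' μ l ≠ ⊤ :=
  mgf'_ne_top_iff.2 <| convex_integrableExpSet.ordConnected.out (mgf'_ne_top_iff.1 ha)
    (mgf'_ne_top_iff.1 hb) hl

theorem Ioo_subset_interior_integrableExpSet (ha : mgf' μ a ≠ ⊤) (hb : mgf' μ b ≠ ⊤) :
    Ioo a b ⊆ interior (integrableExpSet id μ) :=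
  interior_maximal (fun _ hl ↦ mgf'_ne_top_iff.1 (mgf'_ne_top_of_mem_Icc ha hb
    (Ioo_subset_Icc_self hl))) isOpen_Ioo

theorem ofReal_exp_mul_le_add (hl : l ∈ Icc a b) (x : ℝ) :
    ENNReal.ofReal (exp (l * x)) ≤ ENNReal.ofReal (exp (a * x)) + ENNReal.ofReal (exp (b * x)) := by
  rcases le_total 0 x with hx | hx
  · exact le_add_left (ENNReal.ofReal_le_ofReal (exp_le_exp.2
      (mul_le_mul_of_nonneg_right hl.2 hx)))
  · exact le_add_right (ENNReal.ofReal_le_ofReal (exp_le_exp.2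
      (mul_le_mul_of_nonpos_right hl.1 hx)))

theorem continuousOn_mgf' (ha : mgf' μ a ≠ ⊤) (hb : mgf' μ b ≠ ⊤) :
    ContinuousOn (mgf' μ) (Icc a b) := by
  intro l _
  refine tendsto_lintegral_filter_of_dominated_convergence
    (fun x ↦ ENNReal.ofReal (exp (a * x)) + ENNReal.ofReal (exp (b * x)))
    (Eventually.of_forall fun _ ↦ by fun_prop) ?_ ?_ (ae_of_all _ fun x ↦ ?_)
  · filter_upwards [self_mem_nhdsWithin] with t ht
    exact ae_of_all _ (ofReal_exp_mul_le_add ht)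
  · rw [lintegral_add_left (by fun_prop)]
    exact ENNReal.add_ne_top.2 ⟨ha, hb⟩
  · exact ((ENNReal.continuous_ofReal.comp (by fun_prop : Continuous fun t ↦ exp (t * x))).tendsto
      l).mono_left nhdsWithin_le_nhds

theorem continuousOn_logMgfReal (hμ : μ ≠ 0) (ha : mgf' μ a ≠ ⊤) (hb : mgf' μ b ≠ ⊤) :
    ContinuousOn (logMgfReal μ) (Icc a b) := by
  intro l hl
  have hfin := mgf'_ne_top_of_mem_Icc ha hb hl
  exact ((ENNReal.continuousAt_toReal hfin).comp_continuousWithinAt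
    (continuousOn_mgf' ha hb l hl)).log (toReal_mgf'_pos hμ hfin).ne'

theorem tilted'_eq_tilted (hμ : μ ≠ 0) (hl : mgf' μ l ≠ ⊤) : tilted' μ l = μ.tilted (l * ·) := by
  refine congrArg μ.withDensity (funext fun x ↦ ?_)
  rw [logMgfReal, exp_sub, exp_log (toReal_mgf'_pos hμ hl), toReal_mgf']

theorem deriv_logMgfReal_eq_erealMean (hμ : μ ≠ 0) (hl : l ∈ interior (integrableExpSet id μ)) :
    ((deriv (logMgfReal μ) l : ℝ) : EReal) = erealMean (tilted' μ l) := by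
  rw [tilted'_eq_tilted hμ (mgf'_ne_top_iff.2 (interior_subset hl)), logMgfReal_eq_cgf,
    ← integral_tilted_mul_self hl]
  exact (erealMean_eq_integral (memLp_one_iff_integrable.1 (memLp_tilted_mul hl 1))).symm

theorem differentiableAt_logMgfReal (hl : l ∈ interior (integrableExpSet id μ)) :
    DifferentiableAt ℝ (logMgfReal μ) l := by
  rw [logMgfReal_eq_cgf]
  exact (analyticAt_cgf hl).differentiableAt

theorem lintegral_tilted' (hμ : μ ≠ 0) (hl : mgf' μ l ≠ ⊤) (g : ℝ → ℝ≥0∞) :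
    ∫⁻ x, g x ∂(tilted' μ l) = (∫⁻ x, ENNReal.ofReal (exp (l * x)) * g x ∂μ) / mgf' μ l := by
  have hpos := toReal_mgf'_pos hμ hl
  rw [tilted'_eq_tilted hμ hl, lintegral_tilted, div_eq_mul_inv, ← lintegral_mul_const' _ _
    (ENNReal.inv_ne_top.2 (ENNReal.toReal_pos_iff.1 hpos).1.ne')]
  congr with x
  rw [← toReal_mgf', ENNReal.ofReal_div_of_pos hpos, ENNReal.ofReal_toReal hl, div_eq_mul_inv,
    mul_right_comm]

end Mgf

section TiltedMoments

variable {μ : Measure ℝ} {a b : ℝ}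

theorem neg_mul_exp_mul_le (hab : a < b) (x : ℝ) :
    -x * exp (b * x) ≤ (b - a)⁻¹ * exp (a * x) := by
  have hba : 0 < b - a := sub_pos.2 hab
  have hle : (b - a) * -x ≤ exp ((b - a) * -x) := by linarith [add_one_le_exp ((b - a) * -x)]
  calc -x * exp (b * x) = (b - a)⁻¹ * ((b - a) * -x) * exp (b * x) := by field_simp
    _ ≤ (b - a)⁻¹ * exp ((b - a) * -x) * exp (b * x) :=
      mul_le_mul_of_nonneg_right (mul_le_mul_of_nonneg_left hle (inv_nonneg.2 hba.le))
        (exp_pos _).le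
    _ = (b - a)⁻¹ * exp (a * x) := by rw [mul_assoc, ← exp_add]; ring_nf

theorem lintegral_ofReal_exp_mul_neg_ne_top (ha : mgf' μ a ≠ ⊤) (hab : a < b) :
    ∫⁻ x, ENNReal.ofReal (exp (b * x)) * ENNReal.ofReal (-x) ∂μ ≠ ⊤ := by
  refine ne_top_of_le_ne_top (b := ENNReal.ofReal (b - a)⁻¹ * mgf' μ a)
    (ENNReal.mul_ne_top ENNReal.ofReal_ne_top ha) ?_
  rw [mgf', ← lintegral_const_mul' _ _ ENNReal.ofReal_ne_top]
  refine lintegral_mono fun x ↦ ?_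
  rw [← ENNReal.ofReal_mul (exp_pos _).le, ← ENNReal.ofReal_mul (inv_nonneg.2 (sub_pos.2 hab).le),
    mul_comm]
  exact ENNReal.ofReal_le_ofReal (neg_mul_exp_mul_le hab x)

theorem tendsto_lintegral_tilted'_nhdsLT {g : ℝ → ℝ≥0∞} (hμ : μ ≠ 0) (ha : mgf' μ a ≠ ⊤)
    (hb : mgf' μ b ≠ ⊤) (hab : a < b)
    (hg : Tendsto (fun l ↦ ∫⁻ x, ENNReal.ofReal (exp (l * x)) * g x ∂μ) (𝓝[<] b)
      (𝓝 (∫⁻ x, ENNReal.ofReal (exp (b * x)) * g x ∂μ))) :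
    Tendsto (fun l ↦ ∫⁻ x, g x ∂(tilted' μ l)) (𝓝[<] b) (𝓝 (∫⁻ x, g x ∂(tilted' μ b))) := by
  have hmgf : Tendsto (mgf' μ) (𝓝[<] b) (𝓝 (mgf' μ b)) :=
    (continuousOn_mgf' ha hb b ⟨hab.le, le_rfl⟩).mono_of_mem_nhdsWithin
      (mem_of_superset (Ioo_mem_nhdsLT hab) Ioo_subset_Icc_self)
  have hb_ne_zero : mgf' μ b ≠ 0 := (ENNReal.toReal_pos_iff.1 (toReal_mgf'_pos hμ hb)).1.ne'
  rw [lintegral_tilted' hμ hb]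
  refine (ENNReal.Tendsto.div hg (Or.inr hb_ne_zero) hmgf (Or.inl hb)).congr' ?_
  filter_upwards [Ioo_mem_nhdsLT hab] with l hl
  rw [lintegral_tilted' hμ (mgf'_ne_top_of_mem_Icc ha hb (Ioo_subset_Icc_self hl))]

theorem tendsto_lintegral_ofReal_tilted'_nhdsLT (hμ : μ ≠ 0) (ha : mgf' μ a ≠ ⊤)
    (hb : mgf' μ b ≠ ⊤) (hab : a < b) :
    Tendsto (fun l ↦ ∫⁻ x, ENNReal.ofReal x ∂(tilted' μ l)) (𝓝[<] b)
      (𝓝 (∫⁻ x, ENNReal.ofReal x ∂(tilted' μ b))) := by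
  refine tendsto_lintegral_tilted'_nhdsLT hμ ha hb hab
    (tendsto_lintegral_nhdsLT_of_monotone (fun _ ↦ by fun_prop) (fun x l l' hll' ↦ ?_)
      fun x ↦ ?_)
  · rcases le_total x 0 with hx | hx
    · simp [ENNReal.ofReal_of_nonpos hx]
    · dsimp only
      gcongr
  · exact ENNReal.Tendsto.mul_const (((ENNReal.continuous_ofReal.comp
      (by fun_prop : Continuous fun t ↦ exp (t * x))).tendsto b).mono_left nhdsWithin_le_nhds)
      (Or.inr ENNReal.ofReal_ne_top)

theorem tendsto_lintegral_ofReal_neg_tilted'_nhdsLT (hμ : μ ≠ 0) (ha : mgf' μ a ≠ ⊤)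
    (hb : mgf' μ b ≠ ⊤) (hab : a < b) :
    Tendsto (fun l ↦ ∫⁻ x, ENNReal.ofReal (-x) ∂(tilted' μ l)) (𝓝[<] b)
      (𝓝 (∫⁻ x, ENNReal.ofReal (-x) ∂(tilted' μ b))) := by
  refine tendsto_lintegral_tilted'_nhdsLT hμ ha hb hab
    (tendsto_lintegral_nhdsLT_of_antitone (c := (a + b) / 2) (by linarith) (fun _ ↦ by fun_prop)
      (fun x l l' hll' ↦ ?_) (lintegral_ofReal_exp_mul_neg_ne_top ha (by linarith)) fun x ↦ ?_)
  · rcases le_total 0 x with hx | hx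
    · simp [ENNReal.ofReal_of_nonpos (neg_nonpos.2 hx)]
    · exact mul_le_mul_left (ENNReal.ofReal_le_ofReal
      (exp_le_exp.2 (mul_le_mul_of_nonpos_right hll' hx))) _
  · exact ENNReal.Tendsto.mul_const (((ENNReal.continuous_ofReal.comp
      (by fun_prop : Continuous fun t ↦ exp (t * x))).tendsto b).mono_left nhdsWithin_le_nhds)
      (Or.inr ENNReal.ofReal_ne_top)

theorem lintegral_ofReal_neg_tilted'_ne_top (hμ : μ ≠ 0) (ha : mgf' μ a ≠ ⊤)
    (hb : mgf' μ b ≠ ⊤) (hab : a < b) :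
    ∫⁻ x, ENNReal.ofReal (-x) ∂(tilted' μ b) ≠ ⊤ := by
  rw [lintegral_tilted' hμ hb]
  exact ENNReal.div_ne_top (lintegral_ofReal_exp_mul_neg_ne_top ha hab)
    (ENNReal.toReal_pos_iff.1 (toReal_mgf'_pos hμ hb)).1.ne'

end TiltedMoments

theorem logMgf_one_sided_derivative (μ : Measure ℝ) (hμ : μ ≠ 0)
    (hU : (interior {l : ℝ | mgf' μ l ≠ ⊤}).Nonempty)
    (hbdd : BddAbove {l : ℝ | mgf' μ l ≠ ⊤})
    (lp : ℝ) (hlp : lp = sSup {l : ℝ | mgf' μ l ≠ ⊤})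
    (hfin : mgf' μ lp ≠ ⊤) :
    ∃ m : EReal,
      Tendsto (fun l : ℝ => ((deriv (logMgfReal μ) l : ℝ) : EReal))
        (nhdsWithin lp (Set.Iio lp)) (nhds m) ∧
      Tendsto (fun e : ℝ => (((logMgfReal μ lp - logMgfReal μ (lp - e)) / e : ℝ) : EReal))
        (nhdsWithin 0 (Set.Ioi 0)) (nhds m) ∧
      (∫⁻ x, ENNReal.ofReal (-x) ∂(tilted' μ lp)) ≠ ⊤ ∧
      m = ((∫⁻ x, ENNReal.ofReal x ∂(tilted' μ lp) : ℝ≥0∞) : EReal)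
            - (((∫⁻ x, ENNReal.ofReal (-x) ∂(tilted' μ lp)).toReal : ℝ) : EReal) := by
  obtain ⟨l₀, hl₀⟩ := hU
  have hl₀_fin : mgf' μ l₀ ≠ ⊤ := interior_subset hl₀
  have hl₀_lt : l₀ < lp := hlp ▸ lt_csSup_of_mem_interior hbdd hl₀
  have hinterior := Ioo_subset_interior_integrableExpSet hl₀_fin hfin
  have hmean : Tendsto (fun l ↦ erealMean (tilted' μ l)) (𝓝[<] lp)
      (𝓝 (erealMean (tilted' μ lp))) :=
    tendsto_erealMean (tendsto_lintegral_ofReal_tilted'_nhdsLT hμ hl₀_fin hfin hl₀_lt)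
      (tendsto_lintegral_ofReal_neg_tilted'_nhdsLT hμ hl₀_fin hfin hl₀_lt)
      (lintegral_ofReal_neg_tilted'_ne_top hμ hl₀_fin hfin hl₀_lt)
  have hderiv : Tendsto (fun l ↦ ((deriv (logMgfReal μ) l : ℝ) : EReal)) (𝓝[<] lp)
      (𝓝 (erealMean (tilted' μ lp))) := by
    refine hmean.congr' ?_
    filter_upwards [Ioo_mem_nhdsLT hl₀_lt] with l hl
    exact (deriv_logMgfReal_eq_erealMean hμ (hinterior hl)).symm
  refine ⟨_, hderiv, tendsto_slope_nhdsGT_zero_of_tendsto_deriv hl₀_lt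
    (continuousOn_logMgfReal hμ hl₀_fin hfin)
    (fun l hl ↦ (differentiableAt_logMgfReal (hinterior hl)).differentiableWithinAt) hderiv,
    lintegral_ofReal_neg_tilted'_ne_top hμ hl₀_fin hfin hl₀_lt, rfl⟩
end

section
/- Let A be an irreducible nonnegative matrix on a countable set S with ρ(A) < ∞. Then there exists h : S → (0,∞) such that Σ_y A(x,y) h(y) ≤ ρ(A) h(x) for all x ∈ S. -/
open scoped ENNReal
open Filter

variable {S : Type*}

noncomputable def matPow [DecidableEq S] (A : S → S → ℝ≥0∞) : ℕ → S → S → ℝ≥0∞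
  | 0 => fun x y => if x = y then 1 else 0
  | n + 1 => fun x y => ∑' z, matPow A n x z * A z y

/-!
Fix a base point `z`. For `s > ρ` the Green function `G_s(x) = ∑ₖ s⁻ᵏ Aᵏ(x, z)` is finite at
`x = z` by the root test (the entries `Aᵏ(z, z)` are finite by supermultiplicativity) and satisfies
`A G_s ≤ s G_s`. Irreducibility gives Harnack inequalities bounding `G_s(x) / G_s(z)` above and
below uniformly in `s`, so as `s ↓ ρ` the liminf `h` of these ratios is positive and finite, and
Fatou's lemma passes the inequality to the limit: `A h ≤ ρ h`.
-/

theorem ENNReal.tsum_ne_top_of_eventually_le {a b : ℕ → ℝ≥0∞} (ha : ∀ k, a k ≠ ⊤)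
    (hab : ∀ᶠ k in atTop, a k ≤ b k) (hb : ∑' k, b k ≠ ⊤) : ∑' k, a k ≠ ⊤ := by
  obtain ⟨N, hN⟩ := eventually_atTop.1 hab
  rw [← ENNReal.summable.sum_add_tsum_nat_add' (f := a) (k := N)]
  refine ENNReal.add_ne_top.2 ⟨ENNReal.sum_ne_top.2 fun k _ => ha k, ne_top_of_le_ne_top hb ?_⟩
  calc ∑' k, a (k + N) ≤ ∑' k, b (k + N) :=
        ENNReal.tsum_le_tsum fun k => hN _ (Nat.le_add_left N k)
    _ ≤ ∑' k, b k := ENNReal.tsum_comp_le_tsum_of_injective (add_left_injective N) b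

theorem ENNReal.tsum_liminf_le_liminf_tsum {α ι : Type*} {l : Filter ι} [l.IsCountablyGenerated]
    (f : ι → α → ℝ≥0∞) : ∑' y, liminf (f · y) l ≤ liminf (fun i => ∑' y, f i y) l := by
  let : MeasurableSpace α := ⊤
  have : MeasurableSingletonClass α := ⟨fun _ => trivial⟩
  simpa only [MeasureTheory.lintegral_count] using
    MeasureTheory.lintegral_liminf_le (μ := .count) fun i => measurable_from_top (f := f i)

theorem tsum_mul_liminf_le {ι : Type*} {l : Filter ι} [l.NeBot] [l.IsCountablyGenerated]
    {A : S → S → ℝ≥0∞} {H : ι → S → ℝ≥0∞} {s : ι → ℝ≥0∞} {ρ : ℝ≥0∞}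
    (hs : Tendsto s l (nhds ρ)) (hρ : ρ ≠ ⊤) (hH : ∀ i x, ∑' y, A x y * H i y ≤ s i * H i x)
    {x : S} (hx : liminf (H · x) l ≠ ⊤) :
    ∑' y, A x y * liminf (H · y) l ≤ ρ * liminf (H · x) l := calc
  ∑' y, A x y * liminf (H · y) l ≤ ∑' y, liminf (fun i => A x y * H i y) l :=
      ENNReal.tsum_le_tsum fun y => by
        simpa only [liminf_const, Pi.mul_def] using
          ENNReal.le_liminf_mul (f := l) (u := fun _ => A x y) (v := (H · y))
  _ ≤ liminf (fun i => ∑' y, A x y * H i y) l := ENNReal.tsum_liminf_le_liminf_tsum _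
  _ ≤ liminf (fun i => s i * H i x) l := liminf_le_liminf (.of_forall fun i => hH i x)
  _ ≤ limsup s l * liminf (H · x) l :=
      ENNReal.liminf_mul_le (Or.inr hx) (Or.inl (hs.limsup_eq ▸ hρ))
  _ = ρ * liminf (H · x) l := by rw [hs.limsup_eq]

theorem exists_excessive_of_tendsto {A : S → S → ℝ≥0∞} {H : ℕ → S → ℝ≥0∞} {s : ℕ → ℝ≥0∞}
    {ρ : ℝ≥0∞} (hs : Tendsto s atTop (nhds ρ)) (hρ : ρ ≠ ⊤)
    (hH : ∀ n x, ∑' y, A x y * H n y ≤ s n * H n x)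
    (hlower : ∀ x, ∃ c, 0 < c ∧ ∀ n, c ≤ H n x) (hupper : ∀ x, ∃ C, C ≠ ⊤ ∧ ∀ n, H n x ≤ C) :
    ∃ h : S → ℝ≥0∞, (∀ x, 0 < h x) ∧ (∀ x, h x ≠ ⊤) ∧ ∀ x, ∑' y, A x y * h y ≤ ρ * h x := by
  have hfin x : liminf (H · x) atTop ≠ ⊤ := by
    obtain ⟨C, hC, hHC⟩ := hupper x
    exact ne_top_of_le_ne_top hC (liminf_le_of_frequently_le' (.of_forall (hHC ·)))
  refine ⟨fun x => liminf (H · x) atTop, fun x => ?_, hfin, fun x => ?_⟩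
  · obtain ⟨c, hc, hcH⟩ := hlower x
    exact hc.trans_le (le_liminf_of_le (by isBoundedDefault) (.of_forall hcH))
  · exact tsum_mul_liminf_le hs hρ hH (hfin x)

section matPow

variable [DecidableEq S] (A : S → S → ℝ≥0∞)

theorem matPow_zero_self (x : S) : matPow A 0 x x = 1 := if_pos rfl

theorem matPow_one (x y : S) : matPow A 1 x y = A x y := by
  show ∑' w, matPow A 0 x w * A w y = A x y
  rw [tsum_eq_single x fun w hw => by simp [matPow, Ne.symm hw], matPow_zero_self, one_mul]

theorem matPow_add (m n : ℕ) (x y : S) :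
    matPow A (m + n) x y = ∑' w, matPow A m x w * matPow A n w y := by
  induction n generalizing y with
  | zero =>
    rw [Nat.add_zero, tsum_eq_single y fun w hw => by simp [matPow, hw]]
    simp [matPow]
  | succ n ih =>
    show ∑' w, matPow A (m + n) x w * A w y = ∑' w, matPow A m x w * ∑' u, matPow A n w u * A u y
    simp_rw [ih, ← ENNReal.tsum_mul_right, ← ENNReal.tsum_mul_left, mul_assoc]
    exact ENNReal.tsum_comm

theorem matPow_mul_matPow_le (a b : ℕ) (x w y : S) :
    matPow A a x w * matPow A b w y ≤ matPow A (a + b) x y :=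
  (matPow_add A a b x y).symm ▸ ENNReal.le_tsum w

theorem matPow_self_pow_le (k j : ℕ) (x : S) : matPow A k x x ^ j ≤ matPow A (k * j) x x := by
  induction j with
  | zero => simp [matPow_zero_self]
  | succ j ih =>
    calc matPow A k x x ^ (j + 1) ≤ matPow A (k * j) x x * matPow A k x x := by
          rw [pow_succ]; gcongr
      _ ≤ matPow A (k * (j + 1)) x x := matPow_mul_matPow_le A _ _ x x x

theorem eventually_matPow_self_le_pow {x : S} {ρ ρ' : ℝ≥0∞}
    (hρ : Tendsto (fun n : ℕ => (matPow A n x x) ^ ((n : ℝ)⁻¹))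
      (atTop ⊓ Filter.principal {n : ℕ | 0 < matPow A n x x}) (nhds ρ))
    (hρρ' : ρ < ρ') : ∀ᶠ n in atTop, matPow A n x x ≤ ρ' ^ n := by
  have hle := eventually_inf_principal.1 (hρ.eventually_le_const hρρ')
  filter_upwards [hle, eventually_ne_atTop 0] with n hn hn0
  rcases eq_zero_or_pos (matPow A n x x) with h0 | hpos
  · exact h0 ▸ zero_le
  calc matPow A n x x = (matPow A n x x ^ ((n : ℝ)⁻¹)) ^ n :=
        (ENNReal.rpow_inv_natCast_pow hn0 _).symm
    _ ≤ ρ' ^ n := by gcongr; exact hn hpos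

theorem matPow_self_ne_top {x : S} {ρ : ℝ≥0∞} (hρ : ρ ≠ ⊤)
    (hle : ∀ᶠ n in atTop, matPow A n x x ≤ ρ ^ n) (k : ℕ) : matPow A k x x ≠ ⊤ := by
  rcases Nat.eq_zero_or_pos k with rfl | hk
  · simp [matPow_zero_self]
  obtain ⟨N, hN⟩ := eventually_atTop.1 hle
  intro htop
  have : ⊤ ≤ ρ ^ (k * (N + 1)) := calc
    ⊤ = matPow A k x x ^ (N + 1) := by rw [htop, ENNReal.top_pow N.succ_ne_zero]
    _ ≤ matPow A (k * (N + 1)) x x := matPow_self_pow_le A k _ x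
    _ ≤ ρ ^ (k * (N + 1)) := hN _ (by nlinarith)
  exact ENNReal.pow_ne_top hρ (top_le_iff.1 this)

noncomputable def green (r : ℝ≥0∞) (x z : S) : ℝ≥0∞ := ∑' k, r ^ k * matPow A k x z

theorem one_le_green_self (r : ℝ≥0∞) (z : S) : 1 ≤ green A r z z :=
  calc 1 = r ^ 0 * matPow A 0 z z := by rw [pow_zero, matPow_zero_self, one_mul]
    _ ≤ green A r z z := ENNReal.le_tsum 0

theorem pow_mul_tsum_matPow_mul_green_le (r : ℝ≥0∞) (m : ℕ) (x z : S) :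
    r ^ m * ∑' w, matPow A m x w * green A r w z ≤ green A r x z :=
  calc r ^ m * ∑' w, matPow A m x w * green A r w z
      = ∑' k, r ^ (m + k) * matPow A (m + k) x z := by
        simp_rw [green, matPow_add, pow_add, ← ENNReal.tsum_mul_left]
        rw [ENNReal.tsum_comm]
        exact tsum_congr fun k => tsum_congr fun w => by ring
    _ ≤ green A r x z :=
        ENNReal.tsum_comp_le_tsum_of_injective (add_right_injective m) (fun k => r ^ k * _)

theorem tsum_mul_green_le {r : ℝ≥0∞} (hr₀ : r ≠ 0) (hr : r ≠ ⊤) (x z : S) :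
    ∑' y, A x y * green A r y z ≤ r⁻¹ * green A r x z := by
  rw [← ENNReal.mul_le_iff_le_inv hr₀ hr]
  simpa only [pow_one, matPow_one] using pow_mul_tsum_matPow_mul_green_le A r 1 x z

theorem tsum_mul_green_div_le {r : ℝ≥0∞} (hr₀ : r ≠ 0) (hr : r ≠ ⊤) (c : ℝ≥0∞) (x z : S) :
    ∑' y, A x y * (green A r y z / c) ≤ r⁻¹ * (green A r x z / c) := by
  have := tsum_mul_green_le A hr₀ hr x z
  simp_rw [div_eq_mul_inv, ← mul_assoc, ENNReal.tsum_mul_right]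
  gcongr

theorem green_self_ne_top {z : S} {ρ r : ℝ≥0∞}
    (hρ : Tendsto (fun n : ℕ => (matPow A n z z) ^ ((n : ℝ)⁻¹))
      (atTop ⊓ Filter.principal {n : ℕ | 0 < matPow A n z z}) (nhds ρ))
    (hr : ρ < r⁻¹) : green A r z z ≠ ⊤ := by
  obtain ⟨ρ', hρρ', hρ'r⟩ := exists_between hr
  have hle := eventually_matPow_self_le_pow A hρ hρρ'
  have hρ' : ρ' ≠ ⊤ := hρ'r.ne_top
  have hq : r * ρ' < 1 := ENNReal.mul_lt_of_lt_div' (by rwa [one_div])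
  refine ENNReal.tsum_ne_top_of_eventually_le (b := fun k => (r * ρ') ^ k)
    (fun k => ENNReal.mul_ne_top (ENNReal.pow_ne_top ?_) (matPow_self_ne_top A hρ' hle k))
    (hle.mono fun k hk => by rw [mul_pow]; gcongr) ?_
  · exact ENNReal.inv_ne_zero.1 (zero_le.trans_lt hr).ne'
  · rw [ENNReal.tsum_geometric]
    exact ENNReal.inv_ne_top.2 (tsub_pos_of_lt hq).ne'

theorem pow_mul_matPow_le_green_div {r₀ r : ℝ≥0∞} (hr : r₀ ≤ r) {z : S}
    (hz : green A r z z ≠ ⊤) (m : ℕ) (x : S) :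
    r₀ ^ m * matPow A m x z ≤ green A r x z / green A r z z := by
  have hz₀ : green A r z z ≠ 0 := (zero_lt_one.trans_le (one_le_green_self A r z)).ne'
  rw [ENNReal.le_div_iff_mul_le (Or.inl hz₀) (Or.inl hz)]
  calc r₀ ^ m * matPow A m x z * green A r z z ≤ r ^ m * matPow A m x z * green A r z z := by
        gcongr
    _ ≤ r ^ m * ∑' w, matPow A m x w * green A r w z := by
        rw [mul_assoc]; gcongr; exact ENNReal.le_tsum z
    _ ≤ green A r x z := pow_mul_tsum_matPow_mul_green_le A r m x z

theorem green_div_le_inv_pow_mul_matPow {r₀ r : ℝ≥0∞} (hr : r₀ ≤ r) (m : ℕ) (x z : S) :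
    green A r x z / green A r z z ≤ (r₀ ^ m * matPow A m z x)⁻¹ := by
  rw [ENNReal.le_inv_iff_mul_le, ← ENNReal.mul_div_right_comm]
  calc green A r x z * (r₀ ^ m * matPow A m z x) / green A r z z
      ≤ green A r z z / green A r z z := by
        gcongr
        calc green A r x z * (r₀ ^ m * matPow A m z x)
            ≤ r ^ m * ∑' w, matPow A m z w * green A r w z := by
              rw [mul_comm, mul_assoc]; gcongr; exact ENNReal.le_tsum x
          _ ≤ green A r z z := pow_mul_tsum_matPow_mul_green_le A r m z z
    _ ≤ 1 := ENNReal.div_self_le_one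

end matPow

theorem exists_excessive_function_general [DecidableEq S]
    (A : S → S → ℝ≥0∞)
    (hirr : ∀ x y : S, ∃ n, 1 ≤ n ∧ 0 < matPow A n x y)
    (ρ : ℝ≥0∞) (hρT : ρ ≠ ⊤)
    (hρ : ∀ x, Tendsto (fun n : ℕ => (matPow A n x x) ^ ((n : ℝ)⁻¹))
        (atTop ⊓ Filter.principal {n : ℕ | 0 < matPow A n x x}) (nhds ρ)) :
    ∃ h : S → ℝ≥0∞, (∀ x, 0 < h x) ∧ (∀ x, h x ≠ ⊤) ∧
      ∀ x, ∑' y, A x y * h y ≤ ρ * h x := by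
  rcases isEmpty_or_nonempty S with _ | ⟨⟨z⟩⟩
  · exact ⟨1, isEmptyElim, isEmptyElim, isEmptyElim⟩
  obtain ⟨s, hs_anti, hs_mem, hs_lim⟩ := exists_seq_strictAnti_tendsto' hρT.lt_top
  have hr₀ : (s 0)⁻¹ ≠ 0 := ENNReal.inv_ne_zero.2 (hs_mem 0).2.ne
  have hr_mono n : (s 0)⁻¹ ≤ (s n)⁻¹ := ENNReal.inv_le_inv.2 (hs_anti.antitone n.zero_le)
  have hG n : green A (s n)⁻¹ z z ≠ ⊤ :=
    green_self_ne_top A (hρ z) (by rw [inv_inv]; exact (hs_mem n).1)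
  refine exists_excessive_of_tendsto (H := fun n x => green A (s n)⁻¹ x z / green A (s n)⁻¹ z z)
    hs_lim hρT (fun n x => ?_) (fun x => ?_) (fun x => ?_)
  · have hs₀ : s n ≠ 0 := (zero_le.trans_lt (hs_mem n).1).ne'
    simpa only [inv_inv] using tsum_mul_green_div_le A (ENNReal.inv_ne_zero.2 (hs_mem n).2.ne)
      (ENNReal.inv_ne_top.2 hs₀) (green A (s n)⁻¹ z z) x z
  · obtain ⟨m, -, hm⟩ := hirr x z
    exact ⟨(s 0)⁻¹ ^ m * matPow A m x z, ENNReal.mul_pos (pow_ne_zero m hr₀) hm.ne',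
      fun n => pow_mul_matPow_le_green_div A (hr_mono n) (hG n) m x⟩
  · obtain ⟨m, -, hm⟩ := hirr z x
    exact ⟨((s 0)⁻¹ ^ m * matPow A m z x)⁻¹,
      ENNReal.inv_ne_top.2 (ENNReal.mul_pos (pow_ne_zero m hr₀) hm.ne').ne',
      fun n => green_div_le_inv_pow_mul_matPow A (hr_mono n) m x z⟩

theorem exists_excessive_function [Countable S] [DecidableEq S]
    (A : S → S → ℝ≥0∞) (hfin : ∀ x y, A x y ≠ ⊤)
    (hirr : ∀ x y : S, ∃ n, 1 ≤ n ∧ 0 < matPow A n x y)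
    (ρ : ℝ≥0∞) (hρ0 : 0 < ρ) (hρT : ρ ≠ ⊤)
    (hρ : ∀ x, Tendsto (fun n : ℕ => (matPow A n x x) ^ ((n : ℝ)⁻¹))
        (atTop ⊓ Filter.principal {n : ℕ | 0 < matPow A n x x}) (nhds ρ)) :
    ∃ h : S → ℝ≥0∞, (∀ x, 0 < h x) ∧ (∀ x, h x ≠ ⊤) ∧
      ∀ x, ∑' y, A x y * h y ≤ ρ * h x :=
  exists_excessive_function_general A hirr ρ hρT hρ
end
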